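/- arXiv:1902.06488 — 4 statements merged into one kernel-verified Lean document; each statement's English description precedes it below -/
import Mathlib

section
/- Consider the one-step Roe-type update ρᵢ^{new} = ρᵢ - λ [V(x_{i+1/2}, ρᵢ, ρ_{i+1}) + F(ρᵢ, ρ_{i+1}, J_{i+1/2}) - V(x_{i-1/2}, ρ_{i-1}, ρᵢ) - F(ρ_{i-1}, ρᵢ, J_{i-1/2})], where V(x,u,w) = v(x) u + min{0, v(x)}(w-u) and F(u,w,J) = J f(u) + min{0,J}(f(w)-f(u)). If ρⱼ ≥ 0 for all j, f : ℝ⁺ → ℝ⁺ with f(0) = 0 and 0 ≤ f(r) ≤ r, |v(x)| ≤ V_max, |J_{i±1/2}| ≤ ε, and λ ≤ 1/(2(ε + V_max)), then ρᵢ^{new} ≥ 0. -/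
/-!
Both fluxes are upwind fluxes `a p + min{0,a} (q - p) = max{0,a} p + min{0,a} q` of
nonnegative states. Hence the flux leaving cell `i` through either interface is at most
`|a| ρᵢ`, while the flux entering it from the neighbours only increases `ρᵢ`. With
`|v| ≤ V_max`, `|J| ≤ ε` and `f(ρᵢ) ≤ ρᵢ` the total outflow is at most `2(ε + V_max) ρᵢ`,
which the CFL condition bounds by `ρᵢ / λ`.
-/

/-- Roe-type upwind flux for the linear part: `V(x,u,w) = v(x) u + min{0,v(x)}(w-u)`. -/
def roeV (v : ℝ → ℝ) (x u w : ℝ) : ℝ := v x * u + min 0 (v x) * (w - u)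

/-- Roe-type flux for the non-local part: `F(u,w,J) = J f(u) + min{0,J}(f(w)-f(u))`. -/
def roeF (f : ℝ → ℝ) (u w J : ℝ) : ℝ := J * f u + min 0 J * (f w - f u)

-- `roeV v x u w` and `roeF f u w J` unfold to `upwindFlux (v x) u w`
-- and `upwindFlux J (f u) (f w)`.
def upwindFlux (a p q : ℝ) : ℝ := a * p + min 0 a * (q - p)

theorem upwindFlux_eq_max_add_min (a p q : ℝ) :
    upwindFlux a p q = max 0 a * p + min 0 a * q := by
  have := min_add_max 0 a
  rw [upwindFlux]
  linear_combination -p * this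

theorem upwindFlux_le_abs_mul {a p q : ℝ} (hp : 0 ≤ p) (hq : 0 ≤ q) :
    upwindFlux a p q ≤ |a| * p := by
  have hmax : max 0 a * p ≤ |a| * p :=
    mul_le_mul_of_nonneg_right (max_le (abs_nonneg a) (le_abs_self a)) hp
  have hmin : min 0 a * q ≤ 0 := mul_nonpos_of_nonpos_of_nonneg (min_le_left 0 a) hq
  rw [upwindFlux_eq_max_add_min]
  linarith

theorem neg_upwindFlux_le_abs_mul {a p q : ℝ} (hp : 0 ≤ p) (hq : 0 ≤ q) :
    -upwindFlux a q p ≤ |a| * p := by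
  have hmax : 0 ≤ max 0 a * q := mul_nonneg (le_max_left 0 a) hq
  have hneg : -min 0 a ≤ |a| := neg_le.mp (le_min (neg_nonpos.mpr (abs_nonneg a)) (neg_abs_le a))
  have hmin : -min 0 a * p ≤ |a| * p := mul_le_mul_of_nonneg_right hneg hp
  rw [upwindFlux_eq_max_add_min]
  linarith

theorem stmt_6_general (ρ : ℤ → ℝ) (hρ : ∀ j, 0 ≤ ρ j)
    (f : ℝ → ℝ) (hf : ∀ r, 0 ≤ r → 0 ≤ f r ∧ f r ≤ r)
    (v : ℝ → ℝ) (Vmax : ℝ) (hv : ∀ x, |v x| ≤ Vmax)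
    (ε : ℝ) (Jp Jm : ℝ) (hJp : |Jp| ≤ ε) (hJm : |Jm| ≤ ε)
    (lam : ℝ) (hlam : 0 < lam) (hCFL : lam ≤ 1 / (2 * (ε + Vmax)))
    (xp xm : ℝ) (i : ℤ) :
    0 ≤ ρ i - lam * (roeV v xp (ρ i) (ρ (i + 1)) + roeF f (ρ i) (ρ (i + 1)) Jp
      - roeV v xm (ρ (i - 1)) (ρ i) - roeF f (ρ (i - 1)) (ρ i) Jm) := by
  have ha := hρ (i - 1)
  have hu := hρ i
  have hw := hρ (i + 1)
  have hVmax : 0 ≤ Vmax := (abs_nonneg _).trans (hv 0)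
  have hε : 0 ≤ ε := (abs_nonneg _).trans hJp
  have hfu : |Jp| * f (ρ i) ≤ ε * ρ i ∧ |Jm| * f (ρ i) ≤ ε * ρ i :=
    ⟨mul_le_mul hJp (hf _ hu).2 (hf _ hu).1 hε, mul_le_mul hJm (hf _ hu).2 (hf _ hu).1 hε⟩
  have hout_p : roeV v xp (ρ i) (ρ (i + 1)) ≤ Vmax * ρ i :=
    (upwindFlux_le_abs_mul hu hw).trans (mul_le_mul_of_nonneg_right (hv xp) hu)
  have hout_m : -roeV v xm (ρ (i - 1)) (ρ i) ≤ Vmax * ρ i :=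
    (neg_upwindFlux_le_abs_mul hu ha).trans (mul_le_mul_of_nonneg_right (hv xm) hu)
  have hnl_p : roeF f (ρ i) (ρ (i + 1)) Jp ≤ ε * ρ i :=
    (upwindFlux_le_abs_mul (hf _ hu).1 (hf _ hw).1).trans hfu.1
  have hnl_m : -roeF f (ρ (i - 1)) (ρ i) Jm ≤ ε * ρ i :=
    (neg_upwindFlux_le_abs_mul (hf _ hu).1 (hf _ ha).1).trans hfu.2
  have hCFL' : lam * (2 * (ε + Vmax)) ≤ 1 :=
    mul_le_of_le_div₀ zero_le_one (by positivity) hCFL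
  have hflux : lam * (roeV v xp (ρ i) (ρ (i + 1)) + roeF f (ρ i) (ρ (i + 1)) Jp
      - roeV v xm (ρ (i - 1)) (ρ i) - roeF f (ρ (i - 1)) (ρ i) Jm) ≤ ρ i :=
    calc _ ≤ lam * (2 * (ε + Vmax) * ρ i) := by gcongr; linarith
      _ = lam * (2 * (ε + Vmax)) * ρ i := by ring
      _ ≤ ρ i := mul_le_of_le_one_left hu hCFL'
  linarith

/-- Positivity of the one-step Roe-type update under the CFL condition
`λ ≤ 1/(2(ε + V_max))`. -/
theorem stmt_6 (ρ : ℤ → ℝ) (hρ : ∀ j, 0 ≤ ρ j)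
    (f : ℝ → ℝ) (hf0 : f 0 = 0) (hf : ∀ r, 0 ≤ r → 0 ≤ f r ∧ f r ≤ r)
    (v : ℝ → ℝ) (Vmax : ℝ) (hv : ∀ x, |v x| ≤ Vmax)
    (ε : ℝ) (hε : 0 < ε) (Jp Jm : ℝ) (hJp : |Jp| ≤ ε) (hJm : |Jm| ≤ ε)
    (lam : ℝ) (hlam : 0 < lam) (hCFL : lam ≤ 1 / (2 * (ε + Vmax)))
    (xp xm : ℝ) (i : ℤ) :
    0 ≤ ρ i - lam * (roeV v xp (ρ i) (ρ (i + 1)) + roeF f (ρ i) (ρ (i + 1)) Jp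
      - roeV v xm (ρ (i - 1)) (ρ i) - roeF f (ρ (i - 1)) (ρ i) Jm) :=
  stmt_6_general ρ hρ f hf v Vmax hv ε Jp Jm hJp hJm lam hlam hCFL xp xm i
end

section
/- Let H(u,w) = v·u + min{0,v}(w-u) + J f(u) + min{0,J}(f(w)-f(u)) with f differentiable, f' ≥ 0, ‖f'‖_∞ = L_f, |J| ≤ ε, and let λ ≤ 1/(3(ε L_f + |v|)). Define for a sequence (ρᵢ) the quantity A_i = ρ_{i+1} - ρ_i - λ[H_{i+3/2}(ρ_{i+1}, ρ_{i+2}) - H_{i+3/2}(ρ_i, ρ_{i+1}) - H_{i+1/2}(ρ_i, ρ_{i+1}) + H_{i+1/2}(ρ_{i-1}, ρ_i)] where H_{k+1/2} denotes H with parameters (v_{k+1/2}, J_{k+1/2}) all satisfying the above bounds. Then A_i can be written as A_i = δ_{i+1}(ρ_{i+2}-ρ_{i+1}) + θ_i(ρ_i - ρ_{i-1}) + (1 - δ_i - θ_{i+1})(ρ_{i+1}-ρ_i) with δ_i, θ_i ∈ [0, 1/3], and consequently ∑_{i∈ℤ} |A_i| ≤ ∑_{i∈ℤ} |ρ_{i+1}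 - ρ_i| whenever the right side is finite. -/
/-!
Split each flux difference in `A_i` at the intermediate state `H(ρ_j, ρ_j)`. Since `H` is
upwinded, `H(u, w) - H(u, u) = (min{0,v} + min{0,J} s)(w - u)` and
`H(w, w) - H(u, w) = (max{0,v} + max{0,J} s)(w - u)`, where `s` is a difference quotient of `f`,
hence lies in `[0, L_f]` by the mean value theorem. So the CFL condition puts `δ_i, θ_i` in
`[0, 1/3]`, and `A_i` is a combination of three consecutive increments with nonnegative
coefficients. Summing over `i`, the coefficients of each `|ρ_{i+1} - ρ_i|` add up to exactly `1`.
-/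

open Set

/-- Full Roe-type numerical flux `H(u,w) = v u + min{0,v}(w-u) + J f(u) + min{0,J}(f(w)-f(u))`. -/
def roeH (f : ℝ → ℝ) (v J u w : ℝ) : ℝ :=
  v * u + min 0 v * (w - u) + J * f u + min 0 J * (f w - f u)

lemma slope_mem_Icc_of_deriv_mem_Icc {f : ℝ → ℝ} {L : ℝ} (hf : Differentiable ℝ f)
    (hf₀ : ∀ r, 0 ≤ deriv f r) (hfL : ∀ r, deriv f r ≤ L) (x y : ℝ) :
    slope f x y ∈ Icc 0 L := by
  wlog hxy : x < y generalizing x y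
  · rcases (not_lt.mp hxy).lt_or_eq with hyx | rfl
    · rw [slope_comm]
      exact this y x hyx
    · rw [slope_same]
      exact ⟨le_rfl, (hf₀ 0).trans (hfL 0)⟩
  obtain ⟨c, -, hc⟩ :=
    exists_deriv_eq_slope f hxy hf.continuous.continuousOn hf.differentiableOn
  rw [slope_def_field, ← hc]
  exact ⟨hf₀ c, hfL c⟩

lemma mul_add_mul_mem_Icc_of_cfl {lam a b s V ε L : ℝ} (hlam : 0 ≤ lam)
    (ha : a ∈ Icc 0 V) (hb : b ∈ Icc 0 ε) (hs : s ∈ Icc 0 L)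
    (hCFL : lam * (ε * L + V) ≤ 1 / 3) :
    lam * (a + b * s) ∈ Icc 0 (1 / 3) := by
  obtain ⟨ha₀, haV⟩ := ha
  obtain ⟨hb₀, hbε⟩ := hb
  obtain ⟨hs₀, hsL⟩ := hs
  refine ⟨by positivity, ?_⟩
  calc lam * (a + b * s) ≤ lam * (V + ε * L) := by gcongr; linarith
    _ ≤ 1 / 3 := by linarith

lemma mul_le_one_third_of_le_one_div {lam S : ℝ} (hS : 0 ≤ S) (h : lam ≤ 1 / (3 * S)) :
    lam * S ≤ 1 / 3 := by
  rcases hS.eq_or_lt with rfl | hS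
  · norm_num
  · rw [le_div_iff₀ (by positivity)] at h
    linarith

-- Since `D / 0 = 0`, the case split in the definitions of `δ_i, θ_i` is immaterial.
lemma ite_zero_div_sub_eq (x y D : ℝ) :
    (if y = x then 0 else D / (y - x)) = D / (y - x) := by
  split_ifs with h <;> simp [h]

lemma roeH_sub_roeH_diag_right (f : ℝ → ℝ) (v J x y : ℝ) :
    roeH f v J x y - roeH f v J x x = min 0 v * (y - x) + min 0 J * (f y - f x) := by
  simp only [roeH]
  ring

lemma roeH_diag_sub_roeH_left (f : ℝ → ℝ) (v J x y : ℝ) :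
    roeH f v J y y - roeH f v J x y = max 0 v * (y - x) + max 0 J * (f y - f x) := by
  simp only [roeH]
  linear_combination (x - y) * min_add_max 0 v + (f x - f y) * min_add_max 0 J

lemma roeH_right_quotient_mul_sub (f : ℝ → ℝ) (v J lam x y : ℝ) :
    -lam * (roeH f v J x y - roeH f v J x x) / (y - x) * (y - x)
      = -lam * (roeH f v J x y - roeH f v J x x) := by
  refine div_mul_cancel_of_imp fun h => ?_
  rw [sub_eq_zero.mp h, sub_self, mul_zero]

lemma roeH_left_quotient_mul_sub (f : ℝ → ℝ) (v J lam x y : ℝ) :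
    lam * (roeH f v J y y - roeH f v J x y) / (y - x) * (y - x)
      = lam * (roeH f v J y y - roeH f v J x y) := by
  refine div_mul_cancel_of_imp fun h => ?_
  rw [sub_eq_zero.mp h, sub_self, mul_zero]

section RoeFlux

variable {f : ℝ → ℝ} {Lf v J lam : ℝ}
  (hf : Differentiable ℝ f) (hf₀ : ∀ r, 0 ≤ deriv f r) (hfL : ∀ r, deriv f r ≤ Lf)
  (hlam : 0 ≤ lam) (hCFL : lam * (|J| * Lf + |v|) ≤ 1 / 3)
include hf hf₀ hfL hlam hCFL

lemma roeH_right_quotient_mem_Icc (x y : ℝ) :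
    -lam * (roeH f v J x y - roeH f v J x x) / (y - x) ∈ Icc 0 (1 / 3) := by
  rcases eq_or_ne y x with rfl | hyx
  · simp
  have hquot : -lam * (roeH f v J x y - roeH f v J x x) / (y - x)
      = lam * (-min 0 v + -min 0 J * slope f x y) := by
    rw [roeH_sub_roeH_diag_right, slope_def_field]
    field_simp [sub_ne_zero.mpr hyx]
    ring
  rw [hquot]
  refine mul_add_mul_mem_Icc_of_cfl hlam ?_ ?_
    (slope_mem_Icc_of_deriv_mem_Icc hf hf₀ hfL x y) hCFL
  · exact ⟨by simp, by linarith [le_min (neg_nonpos.mpr (abs_nonneg v)) (neg_abs_le v)]⟩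
  · exact ⟨by simp, by linarith [le_min (neg_nonpos.mpr (abs_nonneg J)) (neg_abs_le J)]⟩

lemma roeH_left_quotient_mem_Icc (x y : ℝ) :
    lam * (roeH f v J y y - roeH f v J x y) / (y - x) ∈ Icc 0 (1 / 3) := by
  rcases eq_or_ne y x with rfl | hyx
  · simp
  have hquot : lam * (roeH f v J y y - roeH f v J x y) / (y - x)
      = lam * (max 0 v + max 0 J * slope f x y) := by
    rw [roeH_diag_sub_roeH_left, slope_def_field]
    field_simp [sub_ne_zero.mpr hyx]
  rw [hquot]
  refine mul_add_mul_mem_Icc_of_cfl hlam ?_ ?_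
    (slope_mem_Icc_of_deriv_mem_Icc hf hf₀ hfL x y) hCFL
  · exact ⟨le_max_left 0 v, max_le (abs_nonneg v) (le_abs_self v)⟩
  · exact ⟨le_max_left 0 J, max_le (abs_nonneg J) (le_abs_self J)⟩

end RoeFlux

lemma conservative_increment_eq_incremental_form {H : ℤ → ℝ → ℝ → ℝ} {ρ δ θ : ℤ → ℝ} {lam : ℝ}
    (hδ : ∀ i, δ i * (ρ (i + 1) - ρ i) = -lam * (H i (ρ i) (ρ (i + 1)) - H i (ρ i) (ρ i)))
    (hθ : ∀ i, θ i * (ρ i - ρ (i - 1)) = lam * (H i (ρ i) (ρ i) - H i (ρ (i - 1)) (ρ i)))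
    (i : ℤ) :
    ρ (i + 1) - ρ i - lam * (H (i + 1) (ρ (i + 1)) (ρ (i + 2)) - H (i + 1) (ρ i) (ρ (i + 1))
      - H i (ρ i) (ρ (i + 1)) + H i (ρ (i - 1)) (ρ i))
      = δ (i + 1) * (ρ (i + 2) - ρ (i + 1)) + θ i * (ρ i - ρ (i - 1))
        + (1 - δ i - θ (i + 1)) * (ρ (i + 1) - ρ i) := by
  have hδ₁ := hδ (i + 1)
  have hθ₁ := hθ (i + 1)
  rw [show i + 1 + 1 = i + 2 by ring] at hδ₁
  rw [add_sub_cancel_right] at hθ₁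
  linarith [hδ i, hθ i]

-- Harten's lemma.
theorem tsum_abs_le_of_incremental_form {d δ θ A : ℤ → ℝ} (hd : Summable fun i => |d i|)
    (hδ : ∀ i, 0 ≤ δ i) (hθ : ∀ i, 0 ≤ θ i) (hδθ : ∀ i, δ i + θ (i + 1) ≤ 1)
    (hA : ∀ i, A i = δ (i + 1) * d (i + 1) + θ i * d (i - 1) + (1 - δ i - θ (i + 1)) * d i) :
    ∑' i, |A i| ≤ ∑' i, |d i| := by
  have hδ₁ : Summable fun i => δ i * |d i| :=
    hd.of_nonneg_of_le (fun i => mul_nonneg (hδ i) (abs_nonneg _))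
      (fun i => mul_le_of_le_one_left (abs_nonneg _) (by linarith [hδθ i, hθ (i + 1)]))
  have hθ₁ : Summable fun i => θ (i + 1) * |d i| :=
    hd.of_nonneg_of_le (fun i => mul_nonneg (hθ _) (abs_nonneg _))
      (fun i => mul_le_of_le_one_left (abs_nonneg _) (by linarith [hδθ i, hδ i]))
  have hbound : ∀ i, |A i| ≤
      δ (i + 1) * |d (i + 1)| + θ i * |d (i - 1)| + (1 - δ i - θ (i + 1)) * |d i| := by
    intro i
    have hcoef : 0 ≤ 1 - δ i - θ (i + 1) := by linarith [hδθ i]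
    calc |A i| ≤ |δ (i + 1) * d (i + 1)| + |θ i * d (i - 1)| + |(1 - δ i - θ (i + 1)) * d i| := by
          rw [hA i]
          exact abs_add_three _ _ _
      _ = _ := by
          rw [abs_mul, abs_mul, abs_mul, abs_of_nonneg (hδ _), abs_of_nonneg (hθ _),
            abs_of_nonneg hcoef]
  have hshiftδ : HasSum (fun i => δ (i + 1) * |d (i + 1)|) (∑' i, δ i * |d i|) :=
    (Equiv.addRight (1 : ℤ)).hasSum_iff.mpr hδ₁.hasSum
  have hshiftθ : HasSum (fun i => θ i * |d (i - 1)|) (∑' i, θ (i + 1) * |d i|) := by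
    simpa [Function.comp_def] using (Equiv.subRight (1 : ℤ)).hasSum_iff.mpr hθ₁.hasSum
  have hrest : HasSum (fun i => (1 - δ i - θ (i + 1)) * |d i|)
      (∑' i, |d i| - ∑' i, δ i * |d i| - ∑' i, θ (i + 1) * |d i|) := by
    simpa only [sub_mul, one_mul] using (hd.hasSum.sub hδ₁.hasSum).sub hθ₁.hasSum
  have hsum := (hshiftδ.add hshiftθ).add hrest
  rw [show ∀ a b c : ℝ, a + b + (c - a - b) = c by intros; ring] at hsum
  exact hasSum_le hbound (hsum.summable.of_nonneg_of_le (fun _ => abs_nonneg _) hbound).hasSum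
    hsum

theorem stmt_8_general (f : ℝ → ℝ) (hf : Differentiable ℝ f)
    (Lf : ℝ) (hf' : ∀ r, 0 ≤ deriv f r) (hLf : ∀ r, deriv f r ≤ Lf)
    (ε Vmax : ℝ)
    (v J : ℤ → ℝ) (hv : ∀ k, |v k| ≤ Vmax) (hJ : ∀ k, |J k| ≤ ε)
    (lam : ℝ) (hlam : 0 < lam) (hCFL : lam ≤ 1 / (3 * (ε * Lf + Vmax)))
    (ρ : ℤ → ℝ) (hsum : Summable fun i => |ρ (i + 1) - ρ i|)
    (A : ℤ → ℝ)
    (hA : ∀ i, A i = ρ (i + 1) - ρ i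
      - lam * (roeH f (v (i + 1)) (J (i + 1)) (ρ (i + 1)) (ρ (i + 2))
        - roeH f (v (i + 1)) (J (i + 1)) (ρ i) (ρ (i + 1))
        - roeH f (v i) (J i) (ρ i) (ρ (i + 1))
        + roeH f (v i) (J i) (ρ (i - 1)) (ρ i)))
    (δ θ : ℤ → ℝ)
    (hδ : ∀ i, δ i = if ρ (i + 1) = ρ i then 0 else
      -lam * (roeH f (v i) (J i) (ρ i) (ρ (i + 1))
        - roeH f (v i) (J i) (ρ i) (ρ i)) / (ρ (i + 1) - ρ i))
    (hθ : ∀ i, θ i = if ρ i = ρ (i - 1) then 0 else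
      lam * (roeH f (v i) (J i) (ρ i) (ρ i)
        - roeH f (v i) (J i) (ρ (i - 1)) (ρ i)) / (ρ i - ρ (i - 1))) :
    (∀ i, δ i ∈ Set.Icc (0 : ℝ) (1 / 3) ∧ θ i ∈ Set.Icc (0 : ℝ) (1 / 3)) ∧
    (∀ i, A i = δ (i + 1) * (ρ (i + 2) - ρ (i + 1)) + θ i * (ρ i - ρ (i - 1))
      + (1 - δ i - θ (i + 1)) * (ρ (i + 1) - ρ i)) ∧
    (∑' i : ℤ, |A i|) ≤ ∑' i : ℤ, |ρ (i + 1) - ρ i| := by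
  have hLf₀ : 0 ≤ Lf := (hf' 0).trans (hLf 0)
  have hCFL' := mul_le_one_third_of_le_one_div
    (add_nonneg (mul_nonneg ((abs_nonneg _).trans (hJ 0)) hLf₀) ((abs_nonneg _).trans (hv 0))) hCFL
  have hCFLk : ∀ k, lam * (|J k| * Lf + |v k|) ≤ 1 / 3 := fun k =>
    le_trans (by gcongr; exacts [hJ k, hv k]) hCFL'
  have hδ' : ∀ i, δ i = -lam * (roeH f (v i) (J i) (ρ i) (ρ (i + 1))
      - roeH f (v i) (J i) (ρ i) (ρ i)) / (ρ (i + 1) - ρ i) :=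
    fun i => (hδ i).trans (ite_zero_div_sub_eq _ _ _)
  have hθ' : ∀ i, θ i = lam * (roeH f (v i) (J i) (ρ i) (ρ i)
      - roeH f (v i) (J i) (ρ (i - 1)) (ρ i)) / (ρ i - ρ (i - 1)) :=
    fun i => (hθ i).trans (ite_zero_div_sub_eq _ _ _)
  have hbounds : ∀ i, δ i ∈ Icc (0 : ℝ) (1 / 3) ∧ θ i ∈ Icc (0 : ℝ) (1 / 3) := fun i =>
    ⟨hδ' i ▸ roeH_right_quotient_mem_Icc hf hf' hLf hlam.le (hCFLk i) _ _,
      hθ' i ▸ roeH_left_quotient_mem_Icc hf hf' hLf hlam.le (hCFLk i) _ _⟩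
  have hdecomp : ∀ i, A i = δ (i + 1) * (ρ (i + 2) - ρ (i + 1)) + θ i * (ρ i - ρ (i - 1))
      + (1 - δ i - θ (i + 1)) * (ρ (i + 1) - ρ i) := fun i => by
    rw [hA i]
    exact conservative_increment_eq_incremental_form (H := fun k => roeH f (v k) (J k))
      (fun i => by rw [hδ']; exact roeH_right_quotient_mul_sub ..)
      (fun i => by rw [hθ']; exact roeH_left_quotient_mul_sub ..) i
  refine ⟨hbounds, hdecomp, tsum_abs_le_of_incremental_form hsum (fun i => (hbounds i).1.1)
    (fun i => (hbounds i).2.1) (fun i => by linarith [(hbounds i).1.2, (hbounds (i + 1)).2.2])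
    fun i => ?_⟩
  rw [hdecomp i, show i + 1 + 1 = i + 2 by ring, sub_add_cancel]

/-- Decomposition of the BV increment `A_i` into incremental coefficients
`δ_i, θ_i ∈ [0,1/3]`, and the resulting TV bound `∑|A_i| ≤ ∑|ρ_{i+1}-ρ_i|`. -/
theorem stmt_8 (f : ℝ → ℝ) (hf : Differentiable ℝ f)
    (Lf : ℝ) (hf' : ∀ r, 0 ≤ deriv f r) (hLf : ∀ r, deriv f r ≤ Lf)
    (ε Vmax : ℝ) (hε : 0 < ε)
    (v J : ℤ → ℝ) (hv : ∀ k, |v k| ≤ Vmax) (hJ : ∀ k, |J k| ≤ ε)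
    (lam : ℝ) (hlam : 0 < lam) (hCFL : lam ≤ 1 / (3 * (ε * Lf + Vmax)))
    (ρ : ℤ → ℝ) (hsum : Summable fun i => |ρ (i + 1) - ρ i|)
    (A : ℤ → ℝ)
    (hA : ∀ i, A i = ρ (i + 1) - ρ i
      - lam * (roeH f (v (i + 1)) (J (i + 1)) (ρ (i + 1)) (ρ (i + 2))
        - roeH f (v (i + 1)) (J (i + 1)) (ρ i) (ρ (i + 1))
        - roeH f (v i) (J i) (ρ i) (ρ (i + 1))
        + roeH f (v i) (J i) (ρ (i - 1)) (ρ i)))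
    (δ θ : ℤ → ℝ)
    (hδ : ∀ i, δ i = if ρ (i + 1) = ρ i then 0 else
      -lam * (roeH f (v i) (J i) (ρ i) (ρ (i + 1))
        - roeH f (v i) (J i) (ρ i) (ρ i)) / (ρ (i + 1) - ρ i))
    (hθ : ∀ i, θ i = if ρ i = ρ (i - 1) then 0 else
      lam * (roeH f (v i) (J i) (ρ i) (ρ i)
        - roeH f (v i) (J i) (ρ (i - 1)) (ρ i)) / (ρ i - ρ (i - 1))) :
    (∀ i, δ i ∈ Set.Icc (0 : ℝ) (1 / 3) ∧ θ i ∈ Set.Icc (0 : ℝ) (1 / 3)) ∧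
    (∀ i, A i = δ (i + 1) * (ρ (i + 2) - ρ (i + 1)) + θ i * (ρ i - ρ (i - 1))
      + (1 - δ i - θ (i + 1)) * (ρ (i + 1) - ρ i)) ∧
    (∑' i : ℤ, |A i|) ≤ ∑' i : ℤ, |ρ (i + 1) - ρ i| :=
  stmt_8_general f hf Lf hf' hLf ε Vmax v J hv hJ lam hlam hCFL ρ hsum A hA δ θ hδ hθ
end

section
/- Let f : ℝ⁺ → ℝ⁺ satisfy f(r) ≤ r for all r ≥ 0 and f Lipschitz with constant L_f. In the Lax-Friedrichs flux F(x,u,w) = ½[v(x)(u+w) + J(x)(f(u)+f(w))] - (α/2)(w-u), if α ≥ ‖v‖_{L∞} + ε L_f, |J(x)| ≤ ε, u,w ≥ 0, and λ ≤ 1/(3α), then the one-step update ρᵢ^{new} = ρᵢ - λ[F(x_{i+1/2}, ρᵢ, ρ_{i+1}) - F(x_{i-1/2}, ρ_{i-1}, ρᵢ)] applied to a nonnegative sequence with v and J constant (v(x_{i+1/2}) = v(x_{i-1/2}) = v, J(x_{i+1/2}) = J(x_{i-1/2}) = J) yields ρᵢ^{new} ≥ 0. -/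
/-- Lax-Friedrichs numerical flux with constant coefficients `v`, `J` and viscosity `α`:
`F(u,w) = ½[v(u+w) + J(f(u)+f(w))] - (α/2)(w-u)`. -/
noncomputable def lxfF (f : ℝ → ℝ) (v J α u w : ℝ) : ℝ :=
  (v * (u + w) + J * (f u + f w)) / 2 - α / 2 * (w - u)

/-!
The update is `(1 - λα) ρᵢ + (λ/2) [(α + v) ρᵢ₋₁ + (α - v) ρᵢ₊₁ - J (f ρᵢ₊₁ - f ρᵢ₋₁)]`.
The first term is nonnegative since `λα ≤ 1`, and the Lipschitz bound
`|f ρᵢ₊₁ - f ρᵢ₋₁| ≤ L_f (ρᵢ₋₁ + ρᵢ₊₁)` lets the viscosity `α ≥ |v| + |J| L_f` absorb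
the convective terms in the bracket.
-/

lemma lxfF_update_eq (f : ℝ → ℝ) (v J α lam a b c : ℝ) :
    b - lam * (lxfF f v J α b c - lxfF f v J α a b) =
      (1 - lam * α) * b + lam / 2 * ((α + v) * a + (α - v) * c - J * (f c - f a)) := by
  unfold lxfF
  ring

lemma nonneg_of_abs_sub_le_mul {f : ℝ → ℝ} {L : ℝ} (hf : ∀ a b, |f a - f b| ≤ L * |a - b|) :
    0 ≤ L := by
  have h := hf 1 0
  norm_num at h
  exact (abs_nonneg _).trans h

lemma abs_sub_le_mul_add_of_nonneg {f : ℝ → ℝ} {L : ℝ} (hf : ∀ a b, |f a - f b| ≤ L * |a - b|)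
    {a c : ℝ} (ha : 0 ≤ a) (hc : 0 ≤ c) : |f c - f a| ≤ L * (a + c) :=
  calc |f c - f a| ≤ L * |c - a| := hf c a
    _ ≤ L * (a + c) := by
      gcongr
      · exact nonneg_of_abs_sub_le_mul hf
      · rw [abs_sub_le_iff]; constructor <;> linarith

lemma mul_le_one_of_le_one_div_three_mul {lam α : ℝ} (hlam : 0 ≤ lam)
    (h : lam ≤ 1 / (3 * α)) : lam * α ≤ 1 := by
  rcases le_or_gt α 0 with hα | hα
  · nlinarith
  · rw [le_div_iff₀ (by positivity)] at h
    nlinarith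

lemma lxfF_update_nonneg {f : ℝ → ℝ} {L : ℝ} (hf : ∀ a b, |f a - f b| ≤ L * |a - b|)
    {v J α lam a b c : ℝ} (ha : 0 ≤ a) (hb : 0 ≤ b) (hc : 0 ≤ c)
    (hα : |v| + |J| * L ≤ α) (hlam : 0 ≤ lam) (hCFL : lam * α ≤ 1) :
    0 ≤ b - lam * (lxfF f v J α b c - lxfF f v J α a b) := by
  rw [lxfF_update_eq]
  have hJf : J * (f c - f a) ≤ |J| * L * (a + c) :=
    calc J * (f c - f a) ≤ |J * (f c - f a)| := le_abs_self _
      _ = |J| * |f c - f a| := abs_mul _ _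
      _ ≤ |J| * (L * (a + c)) := by gcongr; exact abs_sub_le_mul_add_of_nonneg hf ha hc
      _ = |J| * L * (a + c) := by ring
  have hbracket : 0 ≤ (α + v) * a + (α - v) * c - J * (f c - f a) := by
    linarith [mul_nonneg (by linarith [neg_abs_le v] : 0 ≤ α + v - |J| * L) ha,
      mul_nonneg (by linarith [le_abs_self v] : 0 ≤ α - v - |J| * L) hc]
  exact add_nonneg (mul_nonneg (by linarith) hb) (mul_nonneg (by positivity) hbracket)

theorem stmt_15_general (ρ : ℤ → ℝ) (hρ : ∀ j, 0 ≤ ρ j)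
    (f : ℝ → ℝ)
    (Lf : ℝ) (hfLip : ∀ a b : ℝ, |f a - f b| ≤ Lf * |a - b|)
    (v J Vmax ε : ℝ) (hv : |v| ≤ Vmax) (hJ : |J| ≤ ε)
    (α : ℝ) (hα : Vmax + ε * Lf ≤ α)
    (lam : ℝ) (hlam : 0 < lam) (hCFL : lam ≤ 1 / (3 * α)) (i : ℤ) :
    0 ≤ ρ i - lam * (lxfF f v J α (ρ i) (ρ (i + 1))
      - lxfF f v J α (ρ (i - 1)) (ρ i)) := by
  have hJLf : |J| * Lf ≤ ε * Lf := by
    gcongr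
    exact nonneg_of_abs_sub_le_mul hfLip
  exact lxfF_update_nonneg hfLip (hρ _) (hρ _) (hρ _) (by linarith) hlam.le
    (mul_le_one_of_le_one_div_three_mul hlam.le hCFL)

/-- Positivity of the one-step Lax-Friedrichs update when
`α ≥ V_max + ε L_f` and `λ ≤ 1/(3α)`. -/
theorem stmt_15 (ρ : ℤ → ℝ) (hρ : ∀ j, 0 ≤ ρ j)
    (f : ℝ → ℝ) (hf0 : f 0 = 0) (hf : ∀ r, 0 ≤ r → 0 ≤ f r ∧ f r ≤ r)
    (Lf : ℝ) (hfLip : ∀ a b : ℝ, |f a - f b| ≤ Lf * |a - b|)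
    (v J Vmax ε : ℝ) (hv : |v| ≤ Vmax) (hε : 0 < ε) (hJ : |J| ≤ ε)
    (α : ℝ) (hα : Vmax + ε * Lf ≤ α)
    (lam : ℝ) (hlam : 0 < lam) (hCFL : lam ≤ 1 / (3 * α)) (i : ℤ) :
    0 ≤ ρ i - lam * (lxfF f v J α (ρ i) (ρ (i + 1))
      - lxfF f v J α (ρ (i - 1)) (ρ i)) :=
  stmt_15_general ρ hρ f Lf hfLip v J Vmax ε hv hJ α hα lam hlam hCFL i
end

section
/- Let η ∈ C³ ∩ W^{3,∞}(ℝ²) and ρ ∈ L¹(ℝ²). With J₁ as the first component of I(ρ) = -ε ∇(η*ρ)/√(1+‖∇(η*ρ)‖²), the mixed second difference satisfies |J₁(x₊,y) - J₁(x₊,y') - J₁(x₋,y) + J₁(x₋,y')| ≤ 2 ε Δx Δy (2‖∇³η‖_{L∞} ‖ρ‖_{L¹} + 3‖∇²η‖²_{L∞} ‖ρ‖²_{L¹}) whenever |x₊ - x₋| = Δx and |y - y'| = Δy. -/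
/-!
Write `c = η * ρ` and `V = ∇c`, so that `J₁ = -ε φ(V)` with `φ(a, b) = a / √(1 + a² + b²)`.
The first partial derivatives of `φ` are bounded by `1` and the second ones by `3/2`, and the mean
value inequality for `t ↦ φ(B + t (A - B)) - φ(D + t (C - D))` gives
`|φ A - φ B - φ C + φ D| ≤ 2 |A - B - C + D| + 6 δ |C - D|` whenever `|A - C|, |B - D| ≤ δ`.
At the values of `V` at the corners of the rectangle, `δ = Lip(V) Δx`, `|C - D| ≤ Lip(V) Δy`, and
`A - B - C + D` is the mixed second difference of `V`. Differentiating under the integral,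
`V = ρ * ∇η`, so `Lip(V) ≤ ‖∇²η‖ ‖ρ‖₁`, and the same inequality applied to `∇η` bounds the mixed
second difference of `V` by `‖∇³η‖ ‖ρ‖₁ Δx Δy`.

Differentiation under the integral needs a dominating function for `ρ ∇η(z - ·)`. Since `η ≥ 0`
has a bounded Hessian, `|∇η| ≤ η + ‖∇²η‖` (a discriminant argument), so `|ρ| (η(z - ·) + ‖∇²η‖)`
dominates as soon as `ρ η(z - ·)` is integrable, and that integrability propagates from one point
`z` to all of them. If it holds nowhere, the Bochner integral is `0` everywhere and so is `J₁`.
-/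

open MeasureTheory Set Metric

noncomputable section

section Calculus

variable {E F : Type*} [NormedAddCommGroup E] [NormedSpace ℝ E]
  [NormedAddCommGroup F] [NormedSpace ℝ F]

theorem norm_sub_le_of_hasFDerivAt {f : E → F} {f' : E → E →L[ℝ] F} {C : ℝ}
    (hf : ∀ x, HasFDerivAt f (f' x) x) (hC : ∀ x, ‖f' x‖ ≤ C) (x y : E) :
    ‖f x - f y‖ ≤ C * ‖x - y‖ :=
  convex_univ.norm_image_sub_le_of_norm_hasFDerivWithin_le (fun z _ => (hf z).hasFDerivWithinAt)
    (fun z _ => hC z) (mem_univ y) (mem_univ x)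

theorem norm_fderiv_fderiv_eq (f : E → F) (x : E) :
    ‖fderiv ℝ (fderiv ℝ f) x‖ = ‖iteratedFDeriv ℝ 2 f x‖ := by
  rw [← norm_iteratedFDeriv_one, norm_iteratedFDeriv_fderiv]

theorem norm_fderiv_sub_le {f : E → F} {C : ℝ} (hf : ContDiff ℝ 2 f)
    (hC : ∀ x, ‖iteratedFDeriv ℝ 2 f x‖ ≤ C) (x y : E) :
    ‖fderiv ℝ f x - fderiv ℝ f y‖ ≤ C * ‖x - y‖ :=
  norm_sub_le_of_hasFDerivAt
    (fun z => ((hf.fderiv_right (m := 1) le_rfl).differentiable one_ne_zero z).hasFDerivAt)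
    (fun z => (norm_fderiv_fderiv_eq f z).trans_le (hC z)) x y

theorem norm_sub_sub_fderiv_apply_le {f : E → F} {C : ℝ} (hf : ContDiff ℝ 2 f)
    (hC : ∀ x, ‖iteratedFDeriv ℝ 2 f x‖ ≤ C) (z w : E) :
    ‖f (z + w) - f z - fderiv ℝ f z w‖ ≤ C * ‖w‖ ^ 2 := by
  have hC0 : 0 ≤ C := (norm_nonneg _).trans (hC z)
  have key := (convex_closedBall z ‖w‖).norm_image_sub_le_of_norm_fderiv_le'
    (fun x _ => (hf.differentiable (by norm_num)) x) (φ := fderiv ℝ f z) (C := C * ‖w‖)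
    (fun x hx => (norm_fderiv_sub_le hf hC x z).trans
      (mul_le_mul_of_nonneg_left (mem_closedBall_iff_norm.1 hx) hC0))
    (mem_closedBall_self (norm_nonneg w)) (y := z + w) (by simp)
  simpa [sq, mul_assoc] using key

theorem norm_fderiv_le_of_nonneg {f : E → ℝ} {C : ℝ} (hf : ContDiff ℝ 2 f)
    (hpos : ∀ x, 0 ≤ f x) (hC : ∀ x, ‖iteratedFDeriv ℝ 2 f x‖ ≤ C) (z : E) :
    ‖fderiv ℝ f z‖ ≤ f z + C := by
  have hC0 : 0 ≤ C := (norm_nonneg _).trans (hC z)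
  refine ContinuousLinearMap.opNorm_le_bound _ (add_nonneg (hpos z) hC0) fun w => ?_
  -- `0 ≤ f (z + t • w)` is bounded above by a quadratic in `t`, whose discriminant is thus `≤ 0`
  have hquad : ∀ t : ℝ, 0 ≤ (C * ‖w‖ ^ 2) * (t * t) + fderiv ℝ f z w * t + f z := by
    intro t
    have h := norm_sub_sub_fderiv_apply_le hf hC z (t • w)
    rw [Real.norm_eq_abs, map_smul, smul_eq_mul, norm_smul, Real.norm_eq_abs, mul_pow, sq_abs] at h
    linear_combination (abs_le.1 h).2 + hpos (z + t • w)
  have hdisc := discrim_le_zero hquad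
  rw [discrim] at hdisc
  refine abs_le_of_sq_le_sq ?_ (mul_nonneg (add_nonneg (hpos z) hC0) (norm_nonneg w))
  nlinarith [sq_nonneg (f z - C), hpos z, sq_nonneg ‖w‖]

theorem apply_add_le_of_nonneg {f : E → ℝ} {C : ℝ} (hf : ContDiff ℝ 2 f)
    (hpos : ∀ x, 0 ≤ f x) (hC : ∀ x, ‖iteratedFDeriv ℝ 2 f x‖ ≤ C) (z w : E) :
    f (z + w) ≤ (1 + ‖w‖) * f z + C * (‖w‖ + ‖w‖ ^ 2) := by
  have htaylor := norm_sub_sub_fderiv_apply_le hf hC z w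
  have hlin : |fderiv ℝ f z w| ≤ (f z + C) * ‖w‖ :=
    ((fderiv ℝ f z).le_opNorm w).trans
      (mul_le_mul_of_nonneg_right (norm_fderiv_le_of_nonneg hf hpos hC z) (norm_nonneg w))
  rw [Real.norm_eq_abs] at htaylor
  nlinarith [(abs_le.1 htaylor).2, (abs_le.1 hlin).2]

theorem norm_sub_sub_add_le_of_hasFDerivAt {f : E → F} {f' : E → E →L[ℝ] F}
    (hf : ∀ x, HasFDerivAt f (f' x) x) {L δ K : ℝ} (hL : ∀ x, ‖f' x‖ ≤ L)
    (hK : ∀ x y, ‖x - y‖ ≤ δ → ‖f' x - f' y‖ ≤ K) {a b c d : E}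
    (hac : ‖a - c‖ ≤ δ) (hbd : ‖b - d‖ ≤ δ) :
    ‖f a - f b - f c + f d‖ ≤ L * ‖a - b - c + d‖ + K * ‖c - d‖ := by
  set g : ℝ → F := fun t => f (b + t • (a - b)) - f (d + t • (c - d))
  have hg : ∀ t, HasDerivAt g (f' (b + t • (a - b)) (a - b) - f' (d + t • (c - d)) (c - d)) t := by
    intro t
    have hline : ∀ u v : E, HasDerivAt (fun t : ℝ => u + t • v) v t := fun u v => by
      simpa using ((hasDerivAt_id t).smul_const v).const_add u
    exact ((hf _).comp_hasDerivAt t (hline b (a - b))).sub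
      ((hf _).comp_hasDerivAt t (hline d (c - d)))
  have hbound : ∀ t ∈ Icc (0 : ℝ) 1,
      ‖f' (b + t • (a - b)) (a - b) - f' (d + t • (c - d)) (c - d)‖
        ≤ L * ‖a - b - c + d‖ + K * ‖c - d‖ := by
    rintro t ⟨ht0, ht1⟩
    set P := b + t • (a - b)
    set Q := d + t • (c - d)
    have hPQ : ‖P - Q‖ ≤ δ := by
      have h := convex_closedBall (0 : E) δ (mem_closedBall_zero_iff.2 hbd)
        (mem_closedBall_zero_iff.2 hac) (sub_nonneg.2 ht1) ht0 (by ring)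
      rwa [mem_closedBall_zero_iff, ← show P - Q = (1 - t) • (b - d) + t • (a - c) by module] at h
    have hsplit : f' P (a - b) - f' Q (c - d) = f' P (a - b - c + d) + (f' P - f' Q) (c - d) := by
      simp only [sub_apply, map_sub, map_add]
      abel
    rw [hsplit]
    exact (norm_add_le _ _).trans (add_le_add ((f' P).le_of_opNorm_le (hL P) _)
      ((f' P - f' Q).le_of_opNorm_le (hK P Q hPQ) _))
  have key := (convex_Icc (0 : ℝ) 1).norm_image_sub_le_of_norm_hasDerivWithin_le
    (fun t _ => (hg t).hasDerivWithinAt) hbound (left_mem_Icc.2 zero_le_one)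
    (right_mem_Icc.2 zero_le_one)
  simp only [g, zero_smul, add_zero, one_smul, add_sub_cancel, sub_zero, norm_one, mul_one] at key
  convert key using 2
  abel

end Calculus

section PlaneLinearMaps

open ContinuousLinearMap

theorem norm_smul_fst_add_smul_snd_le (α β : ℝ) :
    ‖α • fst ℝ ℝ ℝ + β • snd ℝ ℝ ℝ‖ ≤ |α| + |β| := by
  refine opNorm_le_bound _ (by positivity) fun w => ?_
  simp only [add_apply, FunLike.coe_smul, coe_fst', coe_snd', Pi.smul_apply, smul_eq_mul,
    Real.norm_eq_abs]
  calc |α * w.1 + β * w.2| ≤ |α| * |w.1| + |β| * |w.2| := by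
        simpa only [abs_mul] using abs_add_le (α * w.1) (β * w.2)
    _ ≤ |α| * ‖w‖ + |β| * ‖w‖ := by
        gcongr
        exacts [norm_fst_le w, norm_snd_le w]
    _ = (|α| + |β|) * ‖w‖ := by ring

def gradCoords : ((ℝ × ℝ) →L[ℝ] ℝ) →L[ℝ] ℝ × ℝ :=
  (apply ℝ ℝ ((1, 0) : ℝ × ℝ)).prod (apply ℝ ℝ ((0, 1) : ℝ × ℝ))

theorem norm_gradCoords_le (L : (ℝ × ℝ) →L[ℝ] ℝ) : ‖gradCoords L‖ ≤ ‖L‖ := by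
  have h : ∀ v : ℝ × ℝ, ‖v‖ ≤ 1 → ‖L v‖ ≤ ‖L‖ := fun v hv =>
    L.le_of_opNorm_le_of_le le_rfl hv |>.trans_eq (mul_one _)
  simp only [gradCoords, prod_apply, apply_apply, Prod.norm_def]
  exact max_le (h _ (by simp [Prod.norm_def])) (h _ (by simp [Prod.norm_def]))

theorem HasFDerivAt.partialDerivs_eq {f : ℝ × ℝ → ℝ} {f' : (ℝ × ℝ) →L[ℝ] ℝ} {x y : ℝ}
    (h : HasFDerivAt f f' (x, y)) :
    (deriv (fun t => f (t, y)) x, deriv (fun t => f (x, t)) y) = gradCoords f' := by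
  have h₁ := h.comp_hasDerivAt x ((hasDerivAt_id x).prodMk (hasDerivAt_const x y))
  have h₂ := h.comp_hasDerivAt y ((hasDerivAt_const y x).prodMk (hasDerivAt_id y))
  simp only [gradCoords, prod_apply, apply_apply]
  exact Prod.ext h₁.deriv h₂.deriv

/- `normalFst v` is the first component of the unit normal `(v, -1) / √(1 + |v|²)` to a graph
with gradient `v`. Its derivatives are written with `invLen v = (1 + |v|²)^(-1/2)`, which turns
every identity between them into a polynomial one modulo `invLen v ^ 2 * (1 + |v|²) = 1`. -/
namespace GraphNormal

def invLen (v : ℝ × ℝ) : ℝ := (√(1 + v.1 ^ 2 + v.2 ^ 2))⁻¹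

theorem invLen_sq_mul (v : ℝ × ℝ) : invLen v ^ 2 * (1 + v.1 ^ 2 + v.2 ^ 2) = 1 := by
  rw [invLen, inv_pow, Real.sq_sqrt (by positivity), inv_mul_cancel₀ (by positivity)]

theorem hasFDerivAt_invLen (v : ℝ × ℝ) :
    HasFDerivAt invLen (-invLen v ^ 3 • (v.1 • fst ℝ ℝ ℝ + v.2 • snd ℝ ℝ ℝ)) v := by
  have h1 : HasFDerivAt (fun v : ℝ × ℝ => v.1 ^ 2) _ v :=
    (hasFDerivAt_fst (𝕜 := ℝ) (E := ℝ) (F := ℝ)).pow 2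
  have h2 : HasFDerivAt (fun v : ℝ × ℝ => v.2 ^ 2) _ v :=
    (hasFDerivAt_snd (𝕜 := ℝ) (E := ℝ) (F := ℝ)).pow 2
  have hu := (h1.const_add 1).add h2
  have hpos : 0 < 1 + v.1 ^ 2 + v.2 ^ 2 := by positivity
  have hs := (hasDerivAt_inv (Real.sqrt_pos.2 hpos).ne').comp_hasFDerivAt v (hu.sqrt hpos.ne')
  refine hs.congr_fderiv ?_
  ext <;> simp only [Pi.add_apply, one_div, mul_inv_rev, Nat.add_one_sub_one, pow_one, nsmul_eq_mul,
    Nat.cast_ofNat, smul_add, neg_smul, add_comp, neg_comp, smul_comp, fst_comp_inl, snd_comp_inl,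
    fst_comp_inr, snd_comp_inr, smul_zero, neg_zero, add_zero, zero_add, neg_apply, smul_apply,
    id_apply, smul_eq_mul, mul_one, invLen, inv_pow, neg_inj] <;> field_simp

def normalFst (v : ℝ × ℝ) : ℝ := v.1 / √(1 + v.1 ^ 2 + v.2 ^ 2)

def partialFst (v : ℝ × ℝ) : ℝ := (1 + v.2 ^ 2) * invLen v ^ 3

def partialSnd (v : ℝ × ℝ) : ℝ := -(v.1 * v.2) * invLen v ^ 3

theorem abs_mul_invLen_pow_le {X K : ℝ} (v : ℝ × ℝ) (n : ℕ) (hK : 0 ≤ K)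
    (h : X ^ 2 ≤ K ^ 2 * (1 + v.1 ^ 2 + v.2 ^ 2) ^ n) : |X * invLen v ^ n| ≤ K := by
  refine abs_le_of_sq_le_sq ?_ hK
  calc (X * invLen v ^ n) ^ 2 = X ^ 2 * (invLen v ^ 2) ^ n := by ring
    _ ≤ K ^ 2 * (1 + v.1 ^ 2 + v.2 ^ 2) ^ n * (invLen v ^ 2) ^ n := by gcongr
    _ = K ^ 2 * (invLen v ^ 2 * (1 + v.1 ^ 2 + v.2 ^ 2)) ^ n := by rw [mul_pow]; ring
    _ = K ^ 2 := by rw [invLen_sq_mul, one_pow, mul_one]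

theorem four_mul_mul_sq_le_pow_five (s t : ℝ) (hs : 0 ≤ s) (ht : 0 ≤ t) :
    4 * s * (1 + t) ^ 2 ≤ (1 + s + t) ^ 5 := by
  nlinarith [sq_nonneg (1 - s), sq_nonneg (s + t), sq_nonneg (s * t), mul_nonneg hs ht,
    sq_nonneg (1 + s + t),
    pow_le_pow_right₀ (by linarith : (1 : ℝ) ≤ 1 + s + t) (by norm_num : 4 ≤ 5)]

theorem mul_sq_le_pow_five (s t : ℝ) (hs : 0 ≤ s) (ht : 0 ≤ t) :
    t * (2 * s - t - 1) ^ 2 ≤ 9 / 4 * (1 + s + t) ^ 5 := by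
  nlinarith [mul_nonneg hs ht, sq_nonneg (s - t), sq_nonneg (s + t), sq_nonneg (2 * s - t - 1),
    mul_nonneg (mul_nonneg hs hs) ht, mul_nonneg (mul_nonneg ht ht) hs, sq_nonneg (1 + s + t),
    pow_le_pow_right₀ (by linarith : (1 : ℝ) ≤ 1 + s + t) (by norm_num : 3 ≤ 5)]

theorem hasFDerivAt_normalFst (v : ℝ × ℝ) :
    HasFDerivAt normalFst (partialFst v • fst ℝ ℝ ℝ + partialSnd v • snd ℝ ℝ ℝ) v := by
  have h := (hasFDerivAt_fst (𝕜 := ℝ) (E := ℝ) (F := ℝ) (p := v)).mul (hasFDerivAt_invLen v)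
  refine h.congr_fderiv ?_
  ext <;> simp only [smul_add, neg_smul, smul_neg, add_comp, neg_comp, smul_comp, fst_comp_inl,
    snd_comp_inl, fst_comp_inr, snd_comp_inr, smul_zero, neg_zero, add_zero, zero_add, add_apply,
    neg_apply, smul_apply, id_apply, smul_eq_mul, mul_one, partialFst, partialSnd, neg_mul, neg_inj]
  · linear_combination (-invLen v) * invLen_sq_mul v
  · ring

theorem hasFDerivAt_partialFst (v : ℝ × ℝ) :
    HasFDerivAt partialFst ((-3 * v.1 * (1 + v.2 ^ 2) * invLen v ^ 5) • fst ℝ ℝ ℝ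
      + (v.2 * (2 * v.1 ^ 2 - v.2 ^ 2 - 1) * invLen v ^ 5) • snd ℝ ℝ ℝ) v := by
  have h2 : HasFDerivAt (fun v : ℝ × ℝ => v.2 ^ 2) _ v :=
    (hasFDerivAt_snd (𝕜 := ℝ) (E := ℝ) (F := ℝ)).pow 2
  refine ((h2.const_add 1).mul ((hasFDerivAt_invLen v).pow 3)).congr_fderiv ?_
  ext <;> simp only [Nat.add_one_sub_one, nsmul_eq_mul, Nat.cast_ofNat, smul_add, neg_smul,
    smul_neg, pow_one, add_comp, neg_comp, smul_comp, fst_comp_inl, snd_comp_inl, fst_comp_inr,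
    snd_comp_inr, smul_zero, neg_zero, add_zero, zero_add, add_apply, neg_apply, smul_apply,
    id_apply, smul_eq_mul, mul_one, neg_mul, neg_inj]
  · ring
  · linear_combination (-2 * v.2 * invLen v ^ 3) * invLen_sq_mul v

theorem hasFDerivAt_partialSnd (v : ℝ × ℝ) :
    HasFDerivAt partialSnd ((v.2 * (2 * v.1 ^ 2 - v.2 ^ 2 - 1) * invLen v ^ 5) • fst ℝ ℝ ℝ
      + (v.1 * (2 * v.2 ^ 2 - v.1 ^ 2 - 1) * invLen v ^ 5) • snd ℝ ℝ ℝ) v := by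
  have h := ((hasFDerivAt_fst (𝕜 := ℝ) (E := ℝ) (F := ℝ) (p := v)).mul
    (hasFDerivAt_snd (𝕜 := ℝ) (E := ℝ) (F := ℝ))).neg.mul ((hasFDerivAt_invLen v).pow 3)
  refine h.congr_fderiv ?_
  ext <;> simp only [Pi.neg_apply, Pi.mul_apply, Nat.add_one_sub_one, nsmul_eq_mul, Nat.cast_ofNat,
    smul_add, neg_smul, smul_neg, neg_neg, neg_add_rev, add_comp, smul_comp, fst_comp_inl,
    snd_comp_inl, fst_comp_inr, snd_comp_inr, smul_zero, add_zero, zero_add, neg_comp, neg_zero,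
    add_apply, smul_apply, id_apply, smul_eq_mul, mul_one, neg_apply]
  · linear_combination (v.2 * invLen v ^ 3) * invLen_sq_mul v
  · linear_combination (v.1 * invLen v ^ 3) * invLen_sq_mul v

theorem abs_partialFst_le (v : ℝ × ℝ) : |partialFst v| ≤ 1 := by
  rw [partialFst]
  refine abs_mul_invLen_pow_le v 3 zero_le_one ?_
  nlinarith [sq_nonneg v.1, sq_nonneg v.2, pow_nonneg (sq_nonneg v.1) 3,
    mul_nonneg (sq_nonneg v.1) (sq_nonneg v.2)]

theorem abs_partialSnd_le (v : ℝ × ℝ) : |partialSnd v| ≤ 1 := by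
  rw [partialSnd]
  refine abs_mul_invLen_pow_le v 3 zero_le_one ?_
  nlinarith [sq_nonneg v.1, sq_nonneg v.2, sq_nonneg (v.1 ^ 2 - v.2 ^ 2),
    mul_nonneg (sq_nonneg v.1) (sq_nonneg v.2), pow_nonneg (sq_nonneg v.1) 3,
    pow_nonneg (sq_nonneg v.2) 3]

theorem abs_partialFst_sub_le (v w : ℝ × ℝ) : |partialFst v - partialFst w| ≤ 3 * ‖v - w‖ := by
  refine norm_sub_le_of_hasFDerivAt hasFDerivAt_partialFst (fun u => ?_) v w
  have h₁ := four_mul_mul_sq_le_pow_five (u.1 ^ 2) (u.2 ^ 2) (sq_nonneg _) (sq_nonneg _)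
  have h₂ := mul_sq_le_pow_five (u.1 ^ 2) (u.2 ^ 2) (sq_nonneg _) (sq_nonneg _)
  have h₁' := abs_mul_invLen_pow_le (X := -3 * u.1 * (1 + u.2 ^ 2)) (K := 3 / 2) u 5
    (by norm_num) (by nlinarith)
  have h₂' := abs_mul_invLen_pow_le (X := u.2 * (2 * u.1 ^ 2 - u.2 ^ 2 - 1)) (K := 3 / 2) u 5
    (by norm_num) (by nlinarith)
  exact (norm_smul_fst_add_smul_snd_le _ _).trans (by linarith)

theorem abs_partialSnd_sub_le (v w : ℝ × ℝ) : |partialSnd v - partialSnd w| ≤ 3 * ‖v - w‖ := by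
  refine norm_sub_le_of_hasFDerivAt hasFDerivAt_partialSnd (fun u => ?_) v w
  have h₁ := mul_sq_le_pow_five (u.1 ^ 2) (u.2 ^ 2) (sq_nonneg _) (sq_nonneg _)
  have h₂ := mul_sq_le_pow_five (u.2 ^ 2) (u.1 ^ 2) (sq_nonneg _) (sq_nonneg _)
  have h₁' := abs_mul_invLen_pow_le (X := u.2 * (2 * u.1 ^ 2 - u.2 ^ 2 - 1)) (K := 3 / 2) u 5
    (by norm_num) (by nlinarith)
  have h₂' := abs_mul_invLen_pow_le (X := u.1 * (2 * u.2 ^ 2 - u.1 ^ 2 - 1)) (K := 3 / 2) u 5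
    (by norm_num) (by nlinarith)
  exact (norm_smul_fst_add_smul_snd_le _ _).trans (by linarith)

theorem abs_normalFst_sub_sub_add_le {a b c d : ℝ × ℝ} {δ : ℝ} (hac : ‖a - c‖ ≤ δ)
    (hbd : ‖b - d‖ ≤ δ) :
    |normalFst a - normalFst b - normalFst c + normalFst d|
      ≤ 2 * ‖a - b - c + d‖ + 6 * δ * ‖c - d‖ := by
  refine norm_sub_sub_add_le_of_hasFDerivAt hasFDerivAt_normalFst (fun v => ?_)
    (fun v w hvw => ?_) hac hbd
  · refine (norm_smul_fst_add_smul_snd_le _ _).trans ?_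
    linarith [abs_partialFst_le v, abs_partialSnd_le v]
  · rw [add_sub_add_comm, ← sub_smul, ← sub_smul]
    refine (norm_smul_fst_add_smul_snd_le _ _).trans ?_
    linarith [abs_partialFst_sub_le v w, abs_partialSnd_sub_le v w]

theorem abs_normalFst_gradCoords_sub_sub_add_le {G : ℝ × ℝ → (ℝ × ℝ) →L[ℝ] ℝ} {A B : ℝ}
    (hA : 0 ≤ A) (hsub : ∀ z w, ‖G z - G w‖ ≤ A * ‖z - w‖)
    (hmix : ∀ {a b c d : ℝ × ℝ} {δ : ℝ}, ‖a - c‖ ≤ δ → ‖b - d‖ ≤ δ →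
      ‖G a - G b - G c + G d‖ ≤ A * ‖a - b - c + d‖ + B * δ * ‖c - d‖) (x x' t t' : ℝ) :
    |normalFst (gradCoords (G (x, t))) - normalFst (gradCoords (G (x, t')))
        - normalFst (gradCoords (G (x', t))) + normalFst (gradCoords (G (x', t')))|
      ≤ (2 * B + 6 * A ^ 2) * |x - x'| * |t - t'| := by
  set V : ℝ × ℝ → ℝ × ℝ := fun z => gradCoords (G z)
  have hVsub : ∀ z w, ‖V z - V w‖ ≤ A * ‖z - w‖ := fun z w => by
    simpa only [V, ← map_sub] using (norm_gradCoords_le _).trans (hsub z w)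
  have hx : ∀ s, ‖((x, s) : ℝ × ℝ) - (x', s)‖ = |x - x'| := fun s => by simp [Prod.norm_def]
  have ht : ‖((x', t) : ℝ × ℝ) - (x', t')‖ = |t - t'| := by simp [Prod.norm_def]
  have hVt : ‖V (x', t) - V (x', t')‖ ≤ A * |t - t'| := (hVsub _ _).trans_eq (by rw [ht])
  have hVmix : ‖V (x, t) - V (x, t') - V (x', t) + V (x', t')‖ ≤ B * |x - x'| * |t - t'| := by
    have h := hmix (a := (x, t)) (b := (x, t')) (c := (x', t)) (d := (x', t')) (hx t).le (hx t').le
    simp only [ht, show ((x, t) : ℝ × ℝ) - (x, t') - (x', t) + (x', t') = 0 by simp,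
      norm_zero, mul_zero, zero_add] at h
    simpa only [V, ← map_sub, ← map_add] using (norm_gradCoords_le _).trans h
  have h := abs_normalFst_sub_sub_add_le (a := V (x, t)) (b := V (x, t')) (c := V (x', t))
    (d := V (x', t')) ((hVsub _ _).trans_eq (by rw [hx])) ((hVsub _ _).trans_eq (by rw [hx]))
  calc _ ≤ 2 * (B * |x - x'| * |t - t'|) + 6 * (A * |x - x'|) * (A * |t - t'|) :=
        h.trans (by gcongr)
    _ = (2 * B + 6 * A ^ 2) * |x - x'| * |t - t'| := by ring

end GraphNormal

end PlaneLinearMaps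

theorem norm_integral_smul_le {α F : Type*} [MeasurableSpace α] {μ : Measure α}
    [NormedAddCommGroup F] [NormedSpace ℝ F] {ρ : α → ℝ} {g : α → F} {K : ℝ} (hρ : Integrable ρ μ)
    (hg : ∀ p, ‖g p‖ ≤ K) : ‖∫ p, ρ p • g p ∂μ‖ ≤ K * ∫ p, |ρ p| ∂μ := by
  rw [← integral_const_mul]
  refine norm_integral_le_of_norm_le (hρ.abs.const_mul K) (ae_of_all _ fun p => ?_)
  rw [norm_smul, Real.norm_eq_abs, mul_comm]
  exact mul_le_mul_of_nonneg_right (hg p) (abs_nonneg _)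

section Convolution

variable {E : Type*} [NormedAddCommGroup E] [NormedSpace ℝ E]
  [MeasurableSpace E] [BorelSpace E] {μ : Measure E} {η ρ : E → ℝ} {M₂ : ℝ}

theorem integrable_comp_sub_mul (hη : ContDiff ℝ 2 η) (hpos : ∀ x, 0 ≤ η x)
    (hM₂ : ∀ x, ‖iteratedFDeriv ℝ 2 η x‖ ≤ M₂) (hρ : Integrable ρ μ) {z₀ : E}
    (h₀ : Integrable (fun p => η (z₀ - p) * ρ p) μ) (z : E) :
    Integrable (fun p => η (z - p) * ρ p) μ := by
  set r := ‖z - z₀‖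
  have hmeas : AEStronglyMeasurable (fun p => η (z - p) * ρ p) μ :=
    ((hη.continuous.comp (continuous_const.sub continuous_id)).aestronglyMeasurable).mul hρ.1
  refine (((h₀.abs.const_mul (1 + r)).add (hρ.abs.const_mul (M₂ * (r + r ^ 2))))).mono' hmeas
    (ae_of_all _ fun p => ?_)
  have hgrowth := apply_add_le_of_nonneg hη hpos hM₂ (z₀ - p) (z - z₀)
  rw [show z₀ - p + (z - z₀) = z - p by abel] at hgrowth
  simp only [Pi.add_apply, Real.norm_eq_abs, abs_mul, abs_of_nonneg (hpos (z - p)),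
    abs_of_nonneg (hpos (z₀ - p))]
  nlinarith [mul_le_mul_of_nonneg_right hgrowth (abs_nonneg (ρ p))]

theorem integrable_smul_fderiv_comp_sub [FiniteDimensional ℝ E] (hη : ContDiff ℝ 2 η)
    (hpos : ∀ x, 0 ≤ η x) (hM₂ : ∀ x, ‖iteratedFDeriv ℝ 2 η x‖ ≤ M₂) (hρ : Integrable ρ μ) {z : E}
    (hz : Integrable (fun p => η (z - p) * ρ p) μ) :
    Integrable (fun p => ρ p • fderiv ℝ η (z - p)) μ := by
  have hmeas : AEStronglyMeasurable (fun p => ρ p • fderiv ℝ η (z - p)) μ :=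
    hρ.1.smul (((hη.continuous_fderiv two_ne_zero).comp
      (continuous_const.sub continuous_id)).aestronglyMeasurable)
  refine (hz.abs.add (hρ.abs.const_mul M₂)).mono' hmeas (ae_of_all _ fun p => ?_)
  have h := norm_fderiv_le_of_nonneg hη hpos hM₂ (z - p)
  simp only [Pi.add_apply, norm_smul, Real.norm_eq_abs, abs_mul, abs_of_nonneg (hpos (z - p))]
  nlinarith [mul_le_mul_of_nonneg_left h (abs_nonneg (ρ p))]

theorem hasFDerivAt_integral_comp_sub_mul [FiniteDimensional ℝ E] (hη : ContDiff ℝ 2 η)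
    (hpos : ∀ x, 0 ≤ η x) (hM₂ : ∀ x, ‖iteratedFDeriv ℝ 2 η x‖ ≤ M₂) (hρ : Integrable ρ μ)
    {z : E} (hz : Integrable (fun p => η (z - p) * ρ p) μ) :
    HasFDerivAt (fun z => ∫ p, η (z - p) * ρ p ∂μ) (∫ p, ρ p • fderiv ℝ η (z - p) ∂μ) z := by
  have hM₂0 : 0 ≤ M₂ := (norm_nonneg _).trans (hM₂ z)
  refine hasFDerivAt_integral_of_dominated_of_fderiv_le (ball_mem_nhds z one_pos)
    (F := fun x p => η (x - p) * ρ p) (F' := fun x p => ρ p • fderiv ℝ η (x - p))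
    (bound := fun p => |η (z - p) * ρ p| + 2 * M₂ * |ρ p|)
    (Filter.Eventually.of_forall fun x =>
      (integrable_comp_sub_mul hη hpos hM₂ hρ hz x).aestronglyMeasurable) hz
    (integrable_smul_fderiv_comp_sub hη hpos hM₂ hρ hz).aestronglyMeasurable
    (ae_of_all _ fun p x hx => ?_) (hz.abs.add (hρ.abs.const_mul _))
    (ae_of_all _ fun p x _ => ?_)
  · have hx' : ‖(x - p) - (z - p)‖ ≤ 1 := by
      rw [sub_sub_sub_cancel_right, ← dist_eq_norm]
      exact (mem_ball.1 hx).le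
    have h := (norm_le_norm_add_norm_sub' _ (fderiv ℝ η (z - p))).trans
      (add_le_add (norm_fderiv_le_of_nonneg hη hpos hM₂ (z - p))
        ((norm_fderiv_sub_le hη hM₂ (x - p) (z - p)).trans (mul_le_of_le_one_right hM₂0 hx')))
    rw [norm_smul, Real.norm_eq_abs, abs_mul, abs_of_nonneg (hpos (z - p))]
    nlinarith [mul_le_mul_of_nonneg_left h (abs_nonneg (ρ p))]
  · have h := ((hη.differentiable two_ne_zero) (x - p)).hasFDerivAt.comp x
      ((hasFDerivAt_id x).sub_const p)
    simpa using h.mul_const (ρ p)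

theorem norm_integral_smul_fderiv_sub_le [FiniteDimensional ℝ E] (hη : ContDiff ℝ 2 η)
    (hpos : ∀ x, 0 ≤ η x) (hM₂ : ∀ x, ‖iteratedFDeriv ℝ 2 η x‖ ≤ M₂) (hρ : Integrable ρ μ)
    {z w : E} (hz : Integrable (fun p => η (z - p) * ρ p) μ)
    (hw : Integrable (fun p => η (w - p) * ρ p) μ) :
    ‖(∫ p, ρ p • fderiv ℝ η (z - p) ∂μ) - ∫ p, ρ p • fderiv ℝ η (w - p) ∂μ‖
      ≤ (M₂ * ∫ p, |ρ p| ∂μ) * ‖z - w‖ := by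
  rw [← integral_sub (integrable_smul_fderiv_comp_sub hη hpos hM₂ hρ hz)
    (integrable_smul_fderiv_comp_sub hη hpos hM₂ hρ hw)]
  simp_rw [← smul_sub]
  refine (norm_integral_smul_le (K := M₂ * ‖z - w‖) hρ fun p => ?_).trans_eq (by ring)
  simpa using norm_fderiv_sub_le hη hM₂ (z - p) (w - p)

theorem norm_integral_smul_fderiv_sub_sub_add_le [FiniteDimensional ℝ E] {M₃ : ℝ}
    (hη : ContDiff ℝ 3 η) (hpos : ∀ x, 0 ≤ η x) (hM₂ : ∀ x, ‖iteratedFDeriv ℝ 2 η x‖ ≤ M₂)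
    (hM₃ : ∀ x, ‖iteratedFDeriv ℝ 3 η x‖ ≤ M₃) (hρ : Integrable ρ μ)
    (hint : ∀ z, Integrable (fun p => η (z - p) * ρ p) μ) {a b c d : E} {δ : ℝ}
    (hac : ‖a - c‖ ≤ δ) (hbd : ‖b - d‖ ≤ δ) :
    ‖(∫ p, ρ p • fderiv ℝ η (a - p) ∂μ) - (∫ p, ρ p • fderiv ℝ η (b - p) ∂μ)
        - (∫ p, ρ p • fderiv ℝ η (c - p) ∂μ) + ∫ p, ρ p • fderiv ℝ η (d - p) ∂μ‖
      ≤ (M₂ * ∫ p, |ρ p| ∂μ) * ‖a - b - c + d‖ + (M₃ * ∫ p, |ρ p| ∂μ) * δ * ‖c - d‖ := by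
  have hη₂ : ContDiff ℝ 2 η := hη.of_le (by norm_num)
  have hη' : ContDiff ℝ 2 (fderiv ℝ η) := hη.fderiv_right (by norm_num)
  have hI := fun z => integrable_smul_fderiv_comp_sub hη₂ hpos hM₂ hρ (hint z)
  have hab : Integrable (fun p => ρ p • fderiv ℝ η (a - p) - ρ p • fderiv ℝ η (b - p)) μ :=
    (hI a).sub (hI b)
  have habc : Integrable (fun p => ρ p • fderiv ℝ η (a - p) - ρ p • fderiv ℝ η (b - p)
      - ρ p • fderiv ℝ η (c - p)) μ := hab.sub (hI c)
  rw [← integral_sub (hI a) (hI b), ← integral_sub hab (hI c), ← integral_add habc (hI d)]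
  simp_rw [← smul_sub, ← smul_add]
  refine (norm_integral_smul_le (K := M₂ * ‖a - b - c + d‖ + M₃ * δ * ‖c - d‖) hρ
    fun p => ?_).trans_eq (by ring)
  have hM₃' : ∀ x, ‖iteratedFDeriv ℝ 2 (fderiv ℝ η) x‖ ≤ M₃ := fun x => by
    simpa only [norm_iteratedFDeriv_fderiv] using hM₃ x
  have h := norm_sub_sub_add_le_of_hasFDerivAt
    (fun x => ((hη'.differentiable two_ne_zero) x).hasFDerivAt)
    (fun x => (norm_fderiv_fderiv_eq η x).trans_le (hM₂ x))
    (fun x y hxy => (norm_fderiv_sub_le hη' hM₃' x y).trans (mul_le_mul_of_nonneg_left hxy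
      ((norm_nonneg _).trans (hM₃' x))))
    (a := a - p) (b := b - p) (c := c - p) (d := d - p) (δ := δ)
    (by rwa [sub_sub_sub_cancel_right]) (by rwa [sub_sub_sub_cancel_right])
  convert h using 3 <;> abel_nf

theorem exists_hasFDerivAt_integral_comp_sub_mul [FiniteDimensional ℝ E] {M₃ : ℝ}
    (hη : ContDiff ℝ 3 η) (hpos : ∀ x, 0 ≤ η x) (hM₂ : ∀ x, ‖iteratedFDeriv ℝ 2 η x‖ ≤ M₂)
    (hM₃ : ∀ x, ‖iteratedFDeriv ℝ 3 η x‖ ≤ M₃) (hρ : Integrable ρ μ) :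
    ∃ G : E → E →L[ℝ] ℝ, (∀ z, HasFDerivAt (fun z => ∫ p, η (z - p) * ρ p ∂μ) (G z) z) ∧
      (∀ z w, ‖G z - G w‖ ≤ (M₂ * ∫ p, |ρ p| ∂μ) * ‖z - w‖) ∧
      ∀ {a b c d : E} {δ : ℝ}, ‖a - c‖ ≤ δ → ‖b - d‖ ≤ δ →
        ‖G a - G b - G c + G d‖
          ≤ (M₂ * ∫ p, |ρ p| ∂μ) * ‖a - b - c + d‖ + (M₃ * ∫ p, |ρ p| ∂μ) * δ * ‖c - d‖ := by
  have hη₂ : ContDiff ℝ 2 η := hη.of_le (by norm_num)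
  by_cases hint : ∃ z₀, Integrable (fun p => η (z₀ - p) * ρ p) μ
  · obtain ⟨z₀, h₀⟩ := hint
    have hall := integrable_comp_sub_mul hη₂ hpos hM₂ hρ h₀
    exact ⟨fun z => ∫ p, ρ p • fderiv ℝ η (z - p) ∂μ,
      fun z => hasFDerivAt_integral_comp_sub_mul hη₂ hpos hM₂ hρ (hall z),
      fun z w => norm_integral_smul_fderiv_sub_le hη₂ hpos hM₂ hρ (hall z) (hall w),
      fun hac hbd => norm_integral_smul_fderiv_sub_sub_add_le hη hpos hM₂ hM₃ hρ hall hac hbd⟩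
  · -- the integral is then identically `0`, by the junk value of the Bochner integral
    rw [not_exists] at hint
    have hM₂0 : 0 ≤ M₂ := (norm_nonneg _).trans (hM₂ 0)
    have hM₃0 : 0 ≤ M₃ := (norm_nonneg _).trans (hM₃ 0)
    have hR : 0 ≤ ∫ p, |ρ p| ∂μ := integral_nonneg fun p => abs_nonneg _
    refine ⟨0, fun z => ?_, fun z w => by simp; positivity, fun hac _ => ?_⟩
    · simpa [integral_undef (hint _)] using hasFDerivAt_const (0 : ℝ) z
    · have hδ := (norm_nonneg _).trans hac
      simp only [Pi.zero_apply, sub_zero, add_zero, norm_zero]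
      positivity

end Convolution

open GraphNormal

/-- For `η ∈ C³ ∩ W^{3,∞}(ℝ²)` nonnegative and `ρ ∈ L¹(ℝ²)`, with `J₁` the first
component of `I(ρ) = -ε ∇(η*ρ)/√(1+‖∇(η*ρ)‖²)`, the mixed second difference satisfies
`|J₁(xp,y) - J₁(xp,y') - J₁(xm,y) + J₁(xm,y')| ≤
  2 ε Δx Δy (2‖∇³η‖ ‖ρ‖₁ + 3‖∇²η‖² ‖ρ‖₁²)` when `|xp - xm| = Δx`, `|y - y'| = Δy`. -/
theorem stmt_17 (ε : ℝ) (hε : 0 < ε)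
    (η ρ : ℝ × ℝ → ℝ) (hη : ContDiff ℝ 3 η) (hηpos : ∀ p, 0 ≤ η p)
    (M2 M3 : ℝ)
    (hM2 : ∀ p, ‖iteratedFDeriv ℝ 2 η p‖ ≤ M2)
    (hM3 : ∀ p, ‖iteratedFDeriv ℝ 3 η p‖ ≤ M3)
    (hρ : Integrable ρ)
    (conv : ℝ → ℝ → ℝ)
    (hconv : ∀ x y, conv x y = ∫ p : ℝ × ℝ, η (x - p.1, y - p.2) * ρ p)
    (d1 d2 : ℝ → ℝ → ℝ)
    (hd1 : ∀ x y, d1 x y = deriv (fun t => conv t y) x)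
    (hd2 : ∀ x y, d2 x y = deriv (fun t => conv x t) y)
    (J₁ : ℝ → ℝ → ℝ)
    (hJ₁ : ∀ x y, J₁ x y =
      -(ε * d1 x y / Real.sqrt (1 + (d1 x y) ^ 2 + (d2 x y) ^ 2)))
    (xp xm y y' Δx Δy : ℝ)
    (hΔx : |xp - xm| = Δx) (hΔy : |y - y'| = Δy) :
    |J₁ xp y - J₁ xp y' - J₁ xm y + J₁ xm y'| ≤
      2 * ε * Δx * Δy *
        (2 * M3 * (∫ p, |ρ p|) + 3 * M2 ^ 2 * (∫ p, |ρ p|) ^ 2) := by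
  obtain ⟨G, hG, hGsub, hGmix⟩ := exists_hasFDerivAt_integral_comp_sub_mul hη hηpos hM2 hM3 hρ
  have hJ : ∀ x y, J₁ x y = -(ε * normalFst (gradCoords (G (x, y)))) := fun x y => by
    have hgrad : (d1 x y, d2 x y) = gradCoords (G (x, y)) := by
      rw [hd1, hd2, ← (hG (x, y)).partialDerivs_eq]
      simp only [hconv]
      rfl
    rw [hJ₁, ← hgrad, normalFst, mul_div_assoc]
  have hR : 0 ≤ ∫ p, |ρ p| := integral_nonneg fun p => abs_nonneg _
  have hM2₀ : 0 ≤ M2 := (norm_nonneg _).trans (hM2 0)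
  have hM3₀ : 0 ≤ M3 := (norm_nonneg _).trans (hM3 0)
  have hΔx0 : 0 ≤ Δx := hΔx ▸ abs_nonneg _
  have hΔy0 : 0 ≤ Δy := hΔy ▸ abs_nonneg _
  have key := abs_normalFst_gradCoords_sub_sub_add_le (mul_nonneg hM2₀ hR) hGsub hGmix xp xm y y'
  rw [hΔx, hΔy] at key
  simp only [hJ]
  rw [show ∀ a b c d : ℝ, -(ε * a) - -(ε * b) - -(ε * c) + -(ε * d) = -(ε * (a - b - c + d))
    from fun _ _ _ _ => by ring, abs_neg, abs_mul, abs_of_pos hε]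
  calc _ ≤ ε * ((2 * (M3 * ∫ p, |ρ p|) + 6 * (M2 * ∫ p, |ρ p|) ^ 2) * Δx * Δy) := by gcongr
    _ ≤ _ := by
        nlinarith [mul_nonneg (mul_nonneg (mul_nonneg (mul_nonneg hε.le hΔx0) hΔy0) hM3₀) hR]
end
end
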